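/- arXiv:2302.03380 — 2 statements merged into one kernel-verified Lean document; each statement's English description precedes it below -/
import Mathlib

section
/- For all real x > 1, the Gamma function satisfies Γ(x) < x^(x-1). -/
lemma gamma_le_one_aux {x : ℝ} (h1 : 1 ≤ x) (h2 : x ≤ 2) : Real.Gamma x ≤ 1 := by
  have hcvx := Real.convexOn_log_Gamma
  have ha : (0:ℝ) ≤ 2 - x := by linarith
  have hb : (0:ℝ) ≤ x - 1 := by linarith
  have h := hcvx.2 (Set.mem_Ioi.mpr one_pos) (Set.mem_Ioi.mpr two_pos) ha hb (by ring)
  simp only [smul_eq_mul, Function.comp_apply, Real.Gamma_one, Real.Gamma_two, Real.log_one] at h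
  have hx : (2 - x) * 1 + (x - 1) * 2 = x := by ring
  rw [hx] at h
  have hpos : 0 < Real.Gamma x := Real.Gamma_pos_of_pos (by linarith)
  have hlog : Real.log (Real.Gamma x) ≤ 0 := by linarith
  exact (Real.log_nonpos_iff hpos.le).mp hlog

lemma gamma_lt_pow_aux : ∀ n : ℕ, ∀ x : ℝ, 1 < x → x ≤ n → Real.Gamma x < x ^ (x - 1) := by
  intro n
  induction n with
  | zero => intro x hx hxn; norm_num at hxn; linarith
  | succ n ih =>
    intro x hx hxn
    by_cases hle : x ≤ 2
    · have h1 : Real.Gamma x ≤ 1 := gamma_le_one_aux hx.le hle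
      have h2 : (1:ℝ) < x ^ (x - 1) :=
        (Real.one_lt_rpow_iff_of_pos (by linarith)).mpr (Or.inl ⟨hx, by linarith⟩)
      linarith
    · push_neg at hle
      have hx1 : 1 < x - 1 := by linarith
      have hxn' : x - 1 ≤ n := by
        have : x ≤ (n:ℝ) + 1 := by exact_mod_cast hxn
        linarith
      have ihx := ih (x - 1) hx1 hxn'
      have hG : Real.Gamma x = (x - 1) * Real.Gamma (x - 1) := by
        have := Real.Gamma_add_one (s := x - 1) (by linarith)
        simpa using this
      have hpos : (0:ℝ) < x - 1 := by linarith
      have step1 : Real.Gamma x < (x - 1) * (x - 1) ^ (x - 1 - 1) := by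
        rw [hG]
        exact mul_lt_mul_of_pos_left ihx hpos
      have step2 : (x - 1) * (x - 1) ^ (x - 1 - 1) = (x - 1) ^ (x - 1) := by
        have h := Real.rpow_add hpos 1 (x - 1 - 1)
        rw [Real.rpow_one] at h
        rw [← h]
        congr 1
        ring
      have step3 : (x - 1) ^ (x - 1) < x ^ (x - 1) :=
        Real.rpow_lt_rpow hpos.le (by linarith) (by linarith)
      linarith

theorem gamma_lt_pow (x : ℝ) (hx : 1 < x) : Real.Gamma x < x ^ (x - 1) := by
  exact gamma_lt_pow_aux ⌈x⌉₊ x hx (Nat.le_ceil x)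
end

section
/- Let ρ ∈ (0,1), d ≥ 1 a natural number, and m ≥ 1 an integer. If Z_1,...,Z_m are independent random variables with Z_k ~ Poisson(1/k), then E[∏_{k=1}^m (1/(1-ρ^(2k)))^(d·Z_k)] ≤ exp(dρ²/(1-ρ²) + c(d,ρ²)·ρ⁴/(1-ρ⁴)), where c(d,ρ²) = d(d+1)/(2(1-ρ²)^(d+2)). -/
open MeasureTheory ProbabilityTheory
open scoped NNReal

/-!
By independence and the Poisson generating function `E[t ^ Z] = exp (λ (t - 1))`, the expectation
equals `exp (∑ₖ ((1 - ρ ^ (2k))⁻ᵈ - 1) / k)`. The second-order Taylor bound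
`(1 - x)⁻ᵈ ≤ 1 + d x + d (d + 1) / 2 · x² (1 - x)⁻⁽ᵈ⁺²⁾` at `x = ρ ^ (2k) ≤ ρ²` splits the exponent
into `d ∑ₖ ρ^(2k) / k + c(d, ρ²) ∑ₖ ρ^(4k) / k`, and `∑ₖ yᵏ / k = -log (1 - y) ≤ y / (1 - y)`.
-/

open Real Finset

lemma one_div_one_sub_pow_le {x : ℝ} (hx0 : 0 ≤ x) (hx1 : x < 1) (d : ℕ) :
    (1 / (1 - x)) ^ d ≤ 1 + d * x + d * (d + 1) / 2 * x ^ 2 * (1 / (1 - x)) ^ (d + 2) := by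
  set u := 1 / (1 - x)
  have hu1 : 1 ≤ u := by rw [le_div_iff₀ (by linarith)]; linarith
  have hu : u = 1 + x * u := by unfold u; field_simp [(by linarith : 1 - x ≠ 0)]; ring
  induction d with
  | zero => simp
  | succ d ih =>
    have hu_le : u ≤ u ^ (d + 3) := le_self_pow₀ hu1 (by omega)
    have hpow_le : u ^ (d + 2) ≤ u ^ (d + 3) := pow_le_pow_right₀ hu1 (by omega)
    calc u ^ (d + 1) = u * u ^ d := by ring
      _ ≤ u * (1 + d * x + d * (d + 1) / 2 * x ^ 2 * u ^ (d + 2)) := by gcongr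
      _ = 1 + (d + 1) * x + (d + 1) * x ^ 2 * u + d * (d + 1) / 2 * x ^ 2 * u ^ (d + 3) := by
        linear_combination (1 + (d + 1) * x) * hu
      _ ≤ 1 + (d + 1) * x + (d + 1) * x ^ 2 * u ^ (d + 3)
          + d * (d + 1) / 2 * x ^ 2 * u ^ (d + 3) := by gcongr
      _ = _ := by push_cast; ring

lemma one_div_one_sub_pow_sub_one_le {r x : ℝ} (hx0 : 0 ≤ x) (hxr : x ≤ r) (hr1 : r < 1)
    (d : ℕ) :
    (1 / (1 - x)) ^ d - 1 ≤ d * x + d * (d + 1) / (2 * (1 - r) ^ (d + 2)) * x ^ 2 := by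
  have hmono : (1 / (1 - x)) ^ (d + 2) ≤ 1 / (1 - r) ^ (d + 2) := by
    rw [← one_div_pow]
    exact pow_le_pow_left₀ (one_div_nonneg.2 (by linarith))
      (one_div_le_one_div_of_le (by linarith) (by linarith)) _
  calc (1 / (1 - x)) ^ d - 1
      ≤ d * x + d * (d + 1) / 2 * x ^ 2 * (1 / (1 - x)) ^ (d + 2) := by
        linarith [one_div_one_sub_pow_le hx0 (hxr.trans_lt hr1) d]
    _ ≤ d * x + d * (d + 1) / 2 * x ^ 2 * (1 / (1 - r) ^ (d + 2)) := by gcongr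
    _ = _ := by field_simp

lemma sum_range_pow_succ_div_le {r : ℝ} (hr0 : 0 ≤ r) (hr1 : r < 1) (m : ℕ) :
    ∑ k ∈ range m, r ^ (k + 1) / (k + 1) ≤ r / (1 - r) := by
  have hlog : HasSum (fun k : ℕ ↦ r ^ (k + 1) / (k + 1)) (-log (1 - r)) :=
    hasSum_pow_div_log_of_abs_lt_one (by rwa [abs_of_nonneg hr0])
  have hlog_le : 1 - (1 - r)⁻¹ ≤ log (1 - r) := one_sub_inv_le_log_of_pos (by linarith)
  have : r / (1 - r) = (1 - r)⁻¹ - 1 := by field_simp [(by linarith : 1 - r ≠ 0)]; ring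
  calc ∑ k ∈ range m, r ^ (k + 1) / (k + 1)
      ≤ -log (1 - r) := sum_le_hasSum _ (fun k _ ↦ by positivity) hlog
    _ ≤ r / (1 - r) := by linarith

lemma sum_range_one_div_one_sub_pow_sub_one_div_le {r : ℝ} (hr0 : 0 ≤ r) (hr1 : r < 1)
    (d m : ℕ) :
    ∑ k ∈ range m, ((1 / (1 - r ^ (k + 1))) ^ d - 1) / (k + 1) ≤
      d * (r / (1 - r)) + d * (d + 1) / (2 * (1 - r) ^ (d + 2)) * (r ^ 2 / (1 - r ^ 2)) := by
  set C : ℝ := d * (d + 1) / (2 * (1 - r) ^ (d + 2))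
  have hC : 0 ≤ C :=
    div_nonneg (by positivity) (mul_nonneg zero_le_two (pow_nonneg (by linarith) _))
  have hterm (k : ℕ) : ((1 / (1 - r ^ (k + 1))) ^ d - 1) / (k + 1) ≤
      d * (r ^ (k + 1) / (k + 1)) + C * ((r ^ 2) ^ (k + 1) / (k + 1)) := by
    rw [pow_right_comm r 2, mul_div_assoc', mul_div_assoc', ← add_div]
    gcongr
    exact one_div_one_sub_pow_sub_one_le (by positivity)
      (pow_le_of_le_one hr0 hr1.le (Nat.succ_ne_zero _)) hr1 d
  calc ∑ k ∈ range m, ((1 / (1 - r ^ (k + 1))) ^ d - 1) / (k + 1)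
      ≤ d * ∑ k ∈ range m, r ^ (k + 1) / (k + 1)
          + C * ∑ k ∈ range m, (r ^ 2) ^ (k + 1) / (k + 1) := by
        rw [mul_sum, mul_sum, ← sum_add_distrib]
        exact sum_le_sum fun k _ ↦ hterm k
    _ ≤ d * (r / (1 - r)) + C * (r ^ 2 / (1 - r ^ 2)) := by
        gcongr
        · exact sum_range_pow_succ_div_le hr0 hr1 m
        · exact sum_range_pow_succ_div_le (by positivity) (by nlinarith) m

lemma integral_pow_poissonMeasure (r : ℝ≥0) (t : ℝ) :
    ∫ n, t ^ n ∂Po(r) = exp (r * (t - 1)) := by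
  have hexp := (NormedSpace.expSeries_div_hasSum_exp ((r : ℝ) * t)).mul_left (exp (-r))
  rw [← exp_eq_exp_ℝ, ← exp_add] at hexp
  rw [integral_poissonMeasure, show (r : ℝ) * (t - 1) = -r + r * t by ring, ← hexp.tsum_eq]
  congr 1 with n
  rw [smul_eq_mul, mul_pow]
  ring

lemma integral_prod_pow_eq_exp_of_iIndepFun_poisson {ι Ω : Type*} [Fintype ι]
    [MeasurableSpace Ω] {μ : Measure Ω} {Z : ι → Ω → ℕ}
    (hmeas : ∀ i, AEMeasurable (Z i) μ) (hindep : iIndepFun Z μ) {lam : ι → ℝ≥0}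
    (hlaw : ∀ i, μ.map (Z i) = Po(lam i)) (t : ι → ℝ) :
    ∫ ω, ∏ i, t i ^ Z i ω ∂μ = exp (∑ i, lam i * (t i - 1)) := by
  rw [hindep.integral_fun_prod_comp hmeas
    fun i ↦ (measurable_from_top (f := (t i ^ ·))).aestronglyMeasurable, exp_sum]
  refine prod_congr rfl fun i _ ↦ ?_
  rw [← integral_pow_poissonMeasure, ← hlaw i,
    integral_map (hmeas i) (measurable_from_top (f := (t i ^ ·))).aestronglyMeasurable]

theorem poisson_product_expectation_bound_general (ρ : ℝ) (hρ : ρ ∈ Set.Ioo (0 : ℝ) 1)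
    (d m : ℕ)
    {Ω : Type*} [MeasureSpace Ω]
    (Z : Fin m → Ω → ℕ) (hmeas : ∀ i, Measurable (Z i))
    (hindep : iIndepFun Z ℙ)
    (hlaw : ∀ i : Fin m, Measure.map (Z i) ℙ = poissonMeasure (1 / ((i : ℕ) + 1) : ℝ≥0)) :
    ∫ ω, ∏ i : Fin m, (1 / (1 - ρ ^ (2 * ((i : ℕ) + 1)))) ^ (d * Z i ω) ∂ℙ ≤
      Real.exp (d * ρ ^ 2 / (1 - ρ ^ 2) +
        (d * (d + 1) / (2 * (1 - ρ ^ 2) ^ (d + 2))) * ρ ^ 4 / (1 - ρ ^ 4)) := by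
  obtain ⟨hρ0, hρ1⟩ := hρ
  have hbase (i : Fin m) (n : ℕ) : (1 / (1 - ρ ^ (2 * ((i : ℕ) + 1)))) ^ (d * n) =
      ((1 / (1 - (ρ ^ 2) ^ ((i : ℕ) + 1))) ^ d) ^ n := by
    rw [pow_mul, pow_mul]
  simp_rw [hbase]
  rw [integral_prod_pow_eq_exp_of_iIndepFun_poisson (fun i ↦ (hmeas i).aemeasurable) hindep hlaw]
  calc exp (∑ i : Fin m, ((1 / ((i : ℕ) + 1) : ℝ≥0) : ℝ) *
        ((1 / (1 - (ρ ^ 2) ^ ((i : ℕ) + 1))) ^ d - 1))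
      = exp (∑ k ∈ range m, ((1 / (1 - (ρ ^ 2) ^ (k + 1))) ^ d - 1) / (k + 1)) := by
        rw [← Fin.sum_univ_eq_sum_range
          (fun k ↦ ((1 / (1 - (ρ ^ 2) ^ (k + 1))) ^ d - 1) / (k + 1))]
        refine congrArg exp (sum_congr rfl fun i _ ↦ ?_)
        push_cast
        ring
    _ ≤ exp (d * (ρ ^ 2 / (1 - ρ ^ 2)) +
          d * (d + 1) / (2 * (1 - ρ ^ 2) ^ (d + 2)) * ((ρ ^ 2) ^ 2 / (1 - (ρ ^ 2) ^ 2))) :=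
        exp_le_exp.2 <|
          sum_range_one_div_one_sub_pow_sub_one_div_le (by positivity) (by nlinarith) d m
    _ = _ := by ring_nf

/-- Bound on the expectation of the product over independent Poisson variables
`Z k ~ Poisson(1/k)`, `k = 1,…,m`. -/
theorem poisson_product_expectation_bound (ρ : ℝ) (hρ : ρ ∈ Set.Ioo (0 : ℝ) 1)
    (d m : ℕ) (hd : 1 ≤ d) (hm : 1 ≤ m)
    {Ω : Type*} [MeasureSpace Ω] [IsProbabilityMeasure (ℙ : Measure Ω)]
    (Z : Fin m → Ω → ℕ) (hmeas : ∀ i, Measurable (Z i))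
    (hindep : iIndepFun Z ℙ)
    (hlaw : ∀ i : Fin m, Measure.map (Z i) ℙ = poissonMeasure (1 / ((i : ℕ) + 1) : ℝ≥0)) :
    ∫ ω, ∏ i : Fin m, (1 / (1 - ρ ^ (2 * ((i : ℕ) + 1)))) ^ (d * Z i ω) ∂ℙ ≤
      Real.exp (d * ρ ^ 2 / (1 - ρ ^ 2) +
        (d * (d + 1) / (2 * (1 - ρ ^ 2) ^ (d + 2))) * ρ ^ 4 / (1 - ρ ^ 4)) :=
  poisson_product_expectation_bound_general ρ hρ d m Z hmeas hindep hlaw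
end
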